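/- arXiv:1705.08842 — 3 statements merged into one kernel-verified Lean document; each statement's English description precedes it below -/
import Mathlib

section
/- Let ϑ, δ, ξ > 0 with ϑ < min{2, 2δ/ξ²}. Then there exists γ₀ > 0 such that for all real a, b, c, e: a² − ϑ a b + ϑ b² − ϑ b c + (δ/ξ²) c² + e² ≥ γ₀ (a² + b² + c² + e²). -/
/-- A 2x2 quadratic form with nonnegative discriminant condition is nonnegative. -/
lemma quad_nonneg (x y t a b : ℝ) (hx : 0 < x) (hd : t ^ 2 / 4 ≤ x * y) :
    0 ≤ x * a ^ 2 - t * a * b + y * b ^ 2 := by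
  nlinarith [sq_nonneg (2 * x * a - t * b), sq_nonneg b, hx.le]

/-- Coercivity: for 0 < ϑ < min{2, 2δ/ξ²}, there is γ₀ > 0 with
a² − ϑab + ϑb² − ϑbc + (δ/ξ²)c² + e² ≥ γ₀(a² + b² + c² + e²) for all reals. -/
theorem coercivity_estimate (ϑ δ ξ : ℝ) (hϑ : 0 < ϑ) (hδ : 0 < δ) (hξ : 0 < ξ)
    (hϑ2 : ϑ < min 2 (2 * δ / ξ ^ 2)) :
    ∃ γ₀ : ℝ, 0 < γ₀ ∧ ∀ a b c e : ℝ,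
      a ^ 2 - ϑ * a * b + ϑ * b ^ 2 - ϑ * b * c + (δ / ξ ^ 2) * c ^ 2 + e ^ 2 ≥
        γ₀ * (a ^ 2 + b ^ 2 + c ^ 2 + e ^ 2) := by
  set D : ℝ := δ / ξ ^ 2 with hD
  have hDpos : 0 < D := div_pos hδ (pow_pos hξ 2)
  have h2 : ϑ < 2 := lt_of_lt_of_le hϑ2 (min_le_left _ _)
  have h2D : ϑ < 2 * D := by
    have := lt_of_lt_of_le hϑ2 (min_le_right _ _)
    calc ϑ < 2 * δ / ξ ^ 2 := this
    _ = 2 * D := by rw [hD]; ring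
  set ε1 : ℝ := (ϑ / 2 - ϑ ^ 2 / 4) / (1 + ϑ / 2) with hε1
  set ε2 : ℝ := (ϑ * D / 2 - ϑ ^ 2 / 4) / (ϑ / 2 + D) with hε2
  have hden1 : 0 < 1 + ϑ / 2 := by linarith
  have hden2 : 0 < ϑ / 2 + D := by linarith
  have hε1pos : 0 < ε1 := div_pos (by nlinarith) hden1
  have hε2pos : 0 < ε2 := div_pos (by nlinarith) hden2
  refine ⟨min 1 (min ε1 ε2), lt_min one_pos (lt_min hε1pos hε2pos), ?_⟩
  set γ : ℝ := min 1 (min ε1 ε2) with hγ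
  have hγpos : 0 < γ := lt_min one_pos (lt_min hε1pos hε2pos)
  have hγ1 : γ ≤ 1 := min_le_left _ _
  have hγε1 : γ ≤ ε1 := le_trans (min_le_right _ _) (min_le_left _ _)
  have hγε2 : γ ≤ ε2 := le_trans (min_le_right _ _) (min_le_right _ _)
  -- key discriminant bounds
  have key1 : ϑ ^ 2 / 4 ≤ (1 - γ) * (ϑ / 2 - γ) := by
    have h : ε1 * (1 + ϑ / 2) = ϑ / 2 - ϑ ^ 2 / 4 := by
      rw [hε1]; field_simp
    nlinarith [mul_le_mul_of_nonneg_right hγε1 hden1.le, sq_nonneg γ]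
  have key2 : ϑ ^ 2 / 4 ≤ (ϑ / 2 - γ) * (D - γ) := by
    have h : ε2 * (ϑ / 2 + D) = ϑ * D / 2 - ϑ ^ 2 / 4 := by
      rw [hε2]; field_simp
    nlinarith [mul_le_mul_of_nonneg_right hγε2 hden2.le, sq_nonneg γ]
  have h1γ : 0 < 1 - γ := by
    have : ε1 < 1 := by
      rw [hε1, div_lt_one hden1]; nlinarith
    linarith [lt_of_le_of_lt hγε1 this]
  have hϑγ : 0 < ϑ / 2 - γ := by
    nlinarith [key1]
  intro a b c e
  have Q1 := quad_nonneg (1 - γ) (ϑ / 2 - γ) ϑ a b h1γ key1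
  have Q2 := quad_nonneg (ϑ / 2 - γ) (D - γ) ϑ b c hϑγ key2
  have hb : 0 ≤ γ * b ^ 2 := mul_nonneg hγpos.le (sq_nonneg b)
  have he : 0 ≤ (1 - γ) * e ^ 2 := mul_nonneg h1γ.le (sq_nonneg e)
  linarith [Q1, Q2, hb, he]
end

section
/- Suppose a bilinear form L on a finite-dimensional Hilbert space X is bounded with constant β and inf-sup stable with constant γ > 0, and let M : X* → X be SPD with c₁‖x‖² ≤ ‖x‖²_{M⁻¹} ≤ c₂‖x‖². Then the condition number of MA, measured in the M⁻¹-inner product, satisfies κ(MA) ≤ (c₂ β)/(c₁ γ), where A is the operator induced by L. -/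
/-!
Write `Minv` for the Gram matrix of `‖·‖_{M⁻¹}`, so that `MA x = Minv⁻¹ K x =: z` satisfies
`Minv z = K x`. Then `‖z‖²_{M⁻¹} = ⟨z, K x⟩ ≤ β |z| |x|`, and the lower norm equivalence turns this
into `‖z‖_{M⁻¹} ≤ (β / c₁) ‖x‖_{M⁻¹}`. Conversely, inf-sup stability gives `y ≠ 0` with
`γ |x| |y| ≤ ⟨x, K y⟩`; by symmetry of `K` this is `⟨y, Minv z⟩`, which Cauchy–Schwarz in the
`M⁻¹`-inner product and the upper norm equivalence bound by `√c₂ |y| ‖z‖_{M⁻¹}`. Hence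
`‖x‖_{M⁻¹} ≤ (c₂ / γ) ‖z‖_{M⁻¹}`, and the two constants multiply to `c₂ β / (c₁ γ)`.
-/

open Matrix

variable {ι : Type*} [Fintype ι]

theorem Matrix.PosSemidef.dotProduct_mulVec_mul_self_le {M : Matrix ι ι ℝ} (hM : M.PosSemidef)
    (x y : ι → ℝ) :
    (x ⬝ᵥ M *ᵥ y) * (x ⬝ᵥ M *ᵥ y) ≤ (x ⬝ᵥ M *ᵥ x) * (y ⬝ᵥ M *ᵥ y) := by
  let := M.toSeminormedAddCommGroup hM
  let := M.toInnerProductSpace hM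
  have h : ((M *ᵥ y) ⬝ᵥ star x) * ((M *ᵥ y) ⬝ᵥ star x)
      ≤ ((M *ᵥ x) ⬝ᵥ star x) * ((M *ᵥ y) ⬝ᵥ star y) := real_inner_mul_inner_self_le x y
  simpa only [star_trivial, dotProduct_comm (M *ᵥ _)] using h

theorem Matrix.PosSemidef.dotProduct_mulVec_le_sqrt_mul_sqrt {M : Matrix ι ι ℝ}
    (hM : M.PosSemidef) (x y : ι → ℝ) :
    x ⬝ᵥ M *ᵥ y ≤ √(x ⬝ᵥ M *ᵥ x) * √(y ⬝ᵥ M *ᵥ y) := by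
  rw [← Real.sqrt_mul (by simpa using hM.dotProduct_mulVec_nonneg x)]
  refine (le_abs_self _).trans (Real.abs_le_sqrt ?_)
  nlinarith [hM.dotProduct_mulVec_mul_self_le x y]

section

variable {M K : Matrix ι ι ℝ} {x z : ι → ℝ}

theorem sqrt_dotProduct_mulVec_le_of_bounded {β c : ℝ} (hβ : 0 ≤ β) (hc : 0 < c)
    (hbound : ∀ x y : ι → ℝ, |x ⬝ᵥ (K *ᵥ y)| ≤ β * √(x ⬝ᵥ x) * √(y ⬝ᵥ y))
    (hcoer : ∀ x : ι → ℝ, c * (x ⬝ᵥ x) ≤ x ⬝ᵥ (M *ᵥ x)) (hz : M *ᵥ z = K *ᵥ x) :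
    √(z ⬝ᵥ (M *ᵥ z)) ≤ β / c * √(x ⬝ᵥ (M *ᵥ x)) := by
  set a := √(z ⬝ᵥ (M *ᵥ z))
  set b := √(x ⬝ᵥ (M *ᵥ x))
  have hcoer_sqrt (v : ι → ℝ) : √c * √(v ⬝ᵥ v) ≤ √(v ⬝ᵥ (M *ᵥ v)) := by
    rw [← Real.sqrt_mul hc.le]
    exact Real.sqrt_le_sqrt (hcoer v)
  have ha_sq : a ^ 2 = z ⬝ᵥ (K *ᵥ x) := by
    rw [Real.sq_sqrt ((mul_nonneg hc.le (dotProduct_self_star_nonneg z)).trans (hcoer z)), hz]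
  have key : c * a ^ 2 ≤ β * (a * b) := calc
    c * a ^ 2 ≤ c * (β * √(z ⬝ᵥ z) * √(x ⬝ᵥ x)) := by
      rw [ha_sq]
      exact mul_le_mul_of_nonneg_left ((le_abs_self _).trans (hbound z x)) hc.le
    _ = β * ((√c * √(z ⬝ᵥ z)) * (√c * √(x ⬝ᵥ x))) := by
      rw [mul_mul_mul_comm, Real.mul_self_sqrt hc.le]; ring
    _ ≤ β * (a * b) := by gcongr <;> exact hcoer_sqrt _
  rcases (show 0 ≤ a from Real.sqrt_nonneg _).eq_or_lt with ha0 | ha0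
  · rw [← ha0]; positivity
  · rw [div_mul_eq_mul_div, le_div_iff₀ hc]
    nlinarith

theorem sqrt_dotProduct_mulVec_le_of_infSup {γ c : ℝ} (hM : M.PosSemidef) (hK : K.IsSymm)
    (hγ : 0 < γ) (hc : 0 ≤ c)
    (hinfsup : ∀ x : ι → ℝ, ∃ y : ι → ℝ, y ≠ 0 ∧ γ * √(x ⬝ᵥ x) * √(y ⬝ᵥ y) ≤ x ⬝ᵥ (K *ᵥ y))
    (hdom : ∀ x : ι → ℝ, x ⬝ᵥ (M *ᵥ x) ≤ c * (x ⬝ᵥ x)) (hz : M *ᵥ z = K *ᵥ x) :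
    √(x ⬝ᵥ (M *ᵥ x)) ≤ c / γ * √(z ⬝ᵥ (M *ᵥ z)) := by
  obtain ⟨y, hy0, hy⟩ := hinfsup x
  have hy_pos : 0 < √(y ⬝ᵥ y) := Real.sqrt_pos.2 (dotProduct_self_star_pos_iff.2 hy0)
  have hdom_sqrt (v : ι → ℝ) : √(v ⬝ᵥ (M *ᵥ v)) ≤ √c * √(v ⬝ᵥ v) := by
    rw [← Real.sqrt_mul hc]
    exact Real.sqrt_le_sqrt (hdom v)
  have hxKy : x ⬝ᵥ (K *ᵥ y) = y ⬝ᵥ (M *ᵥ z) := by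
    rw [dotProduct_mulVec, ← mulVec_transpose, hK.eq, dotProduct_comm, hz]
  have key : γ * √(x ⬝ᵥ x) * √(y ⬝ᵥ y) ≤ √c * √(z ⬝ᵥ (M *ᵥ z)) * √(y ⬝ᵥ y) := calc
    γ * √(x ⬝ᵥ x) * √(y ⬝ᵥ y) ≤ y ⬝ᵥ (M *ᵥ z) := hxKy ▸ hy
    _ ≤ √(y ⬝ᵥ (M *ᵥ y)) * √(z ⬝ᵥ (M *ᵥ z)) := hM.dotProduct_mulVec_le_sqrt_mul_sqrt y z
    _ ≤ √c * √(y ⬝ᵥ y) * √(z ⬝ᵥ (M *ᵥ z)) := by gcongr; exact hdom_sqrt y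
    _ = √c * √(z ⬝ᵥ (M *ᵥ z)) * √(y ⬝ᵥ y) := by ring
  have hx : γ * √(x ⬝ᵥ x) ≤ √c * √(z ⬝ᵥ (M *ᵥ z)) := le_of_mul_le_mul_right key hy_pos
  rw [div_mul_eq_mul_div, le_div_iff₀ hγ]
  calc √(x ⬝ᵥ (M *ᵥ x)) * γ ≤ √c * √(x ⬝ᵥ x) * γ := by gcongr; exact hdom_sqrt x
    _ = √c * (γ * √(x ⬝ᵥ x)) := by ring
    _ ≤ √c * (√c * √(z ⬝ᵥ (M *ᵥ z))) := by gcongr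
    _ = c * √(z ⬝ᵥ (M *ᵥ z)) := by rw [← mul_assoc, Real.mul_self_sqrt hc]

end

/-- Mardal–Winther norm-equivalence: if the bilinear form x ↦ xᵀKy is bounded by β
and inf-sup stable with γ > 0 (in the Euclidean norm), and the SPD matrix Minv
defines a norm ‖x‖²_{M⁻¹} = xᵀ Minv x with c₁‖x‖² ≤ ‖x‖²_{M⁻¹} ≤ c₂‖x‖², then
the condition number of MA = Minv⁻¹K in the M⁻¹-norm is at most c₂β/(c₁γ). -/
theorem condition_number_bound (n : ℕ)
    (K Minv : Matrix (Fin n) (Fin n) ℝ) (hMinv : Minv.PosDef)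
    (β γ c₁ c₂ : ℝ) (hβ : 0 < β) (hγ : 0 < γ) (hc₁ : 0 < c₁) (hc₂ : 0 < c₂)
    (hbound : ∀ x y : Fin n → ℝ,
      |x ⬝ᵥ (K *ᵥ y)| ≤ β * Real.sqrt (x ⬝ᵥ x) * Real.sqrt (y ⬝ᵥ y))
    (hinfsup : ∀ x : Fin n → ℝ, ∃ y : Fin n → ℝ, y ≠ 0 ∧
      γ * Real.sqrt (x ⬝ᵥ x) * Real.sqrt (y ⬝ᵥ y) ≤ x ⬝ᵥ (K *ᵥ y))
    (hsymm : K.IsSymm)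
    (hequiv : ∀ x : Fin n → ℝ,
      c₁ * (x ⬝ᵥ x) ≤ x ⬝ᵥ (Minv *ᵥ x) ∧ x ⬝ᵥ (Minv *ᵥ x) ≤ c₂ * (x ⬝ᵥ x)) :
    ∃ C₁ C₂ : ℝ, C₁ * C₂ ≤ (c₂ * β) / (c₁ * γ) ∧
      (∀ x : Fin n → ℝ,
        Real.sqrt (((Minv⁻¹ * K) *ᵥ x) ⬝ᵥ (Minv *ᵥ ((Minv⁻¹ * K) *ᵥ x))) ≤
          C₁ * Real.sqrt (x ⬝ᵥ (Minv *ᵥ x))) ∧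
      (∀ x : Fin n → ℝ,
        Real.sqrt (x ⬝ᵥ (Minv *ᵥ x)) ≤
          C₂ * Real.sqrt (((Minv⁻¹ * K) *ᵥ x) ⬝ᵥ (Minv *ᵥ ((Minv⁻¹ * K) *ᵥ x)))) := by
  have hMA (x : Fin n → ℝ) : Minv *ᵥ ((Minv⁻¹ * K) *ᵥ x) = K *ᵥ x := by
    rw [mulVec_mulVec, mul_nonsing_inv_cancel_left _ _ (isUnit_iff_isUnit_det _ |>.1 hMinv.isUnit)]
  refine ⟨β / c₁, c₂ / γ, ?_, fun x => ?_, fun x => ?_⟩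
  · rw [div_mul_div_comm, mul_comm β]
  · exact sqrt_dotProduct_mulVec_le_of_bounded hβ.le hc₁ hbound (fun v => (hequiv v).1) (hMA x)
  · exact sqrt_dotProduct_mulVec_le_of_infSup hMinv.posSemidef hsymm hγ hc₂.le hinfsup
      (fun v => (hequiv v).2) (hMA x)
end

section
/- Let A be an invertible linear operator on a finite-dimensional real inner product space (X, (·,·)) such that there exist Σ, Υ > 0 with Σ(x,x) ≤ (Ax, x) and ‖Ax‖ ≤ Υ‖x‖ for all x. Then for the GMRES iterates xᵐ applied to Ax = b, the residuals satisfy ‖A(x − xᵐ)‖² ≤ (1 − Σ²/Υ²)ᵐ ‖A(x − x⁰)‖², where xᵐ minimizes ‖A(x − y)‖ over y ∈ x⁰ + span{r⁰, Ar⁰, …, Aᵐ⁻¹r⁰}. -/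
open RealInnerProductSpace

/-- One-step Elman bound: there is a step size α with
`‖r − α A r‖² ≤ (1 − Σ²/Υ²) ‖r‖²`. -/
lemma gmres_one_step
    {X : Type*} [NormedAddCommGroup X] [InnerProductSpace ℝ X]
    (A : X →L[ℝ] X) (Sg Up : ℝ) (hSg : 0 < Sg) (hUp : 0 < Up)
    (hlow : ∀ v : X, Sg * ⟪v, v⟫ ≤ ⟪A v, v⟫)
    (hup : ∀ v : X, ‖A v‖ ≤ Up * ‖v‖)
    (hq : 0 ≤ 1 - Sg ^ 2 / Up ^ 2) (r : X) :
    ∃ α : ℝ, ‖r - α • A r‖ ^ 2 ≤ (1 - Sg ^ 2 / Up ^ 2) * ‖r‖ ^ 2 := by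
  by_cases hr : r = 0
  · exact ⟨0, by simp [hr]⟩
  · have hc : Sg * ‖r‖ ^ 2 ≤ ⟪A r, r⟫ := by
      have := hlow r
      rwa [real_inner_self_eq_norm_sq] at this
    have hrpos : (0:ℝ) < ‖r‖ := norm_pos_iff.mpr hr
    have hcpos : 0 < ⟪A r, r⟫ :=
      lt_of_lt_of_le (mul_pos hSg (pow_pos hrpos 2)) hc
    have hAr : A r ≠ 0 := by
      intro h; rw [h] at hcpos; simp at hcpos
    have hn : (0:ℝ) < ‖A r‖ ^ 2 := pow_pos (norm_pos_iff.mpr hAr) 2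
    set c : ℝ := ⟪A r, r⟫ with hcdef
    set n : ℝ := ‖A r‖ ^ 2 with hndef
    have hnle : n ≤ Up ^ 2 * ‖r‖ ^ 2 := by
      have h1 := hup r
      have h2 : ‖A r‖ ^ 2 ≤ (Up * ‖r‖) ^ 2 :=
        pow_le_pow_left₀ (norm_nonneg _) h1 2
      calc n ≤ (Up * ‖r‖) ^ 2 := h2
        _ = Up ^ 2 * ‖r‖ ^ 2 := by ring
    refine ⟨c / n, ?_⟩
    have h1 : ⟪r, (c / n) • A r⟫ = (c / n) * c := by
      rw [real_inner_smul_right, real_inner_comm]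
    have h2 : ‖(c / n) • A r‖ ^ 2 = (c / n) ^ 2 * n := by
      rw [norm_smul, Real.norm_eq_abs, mul_pow, sq_abs]
    have expand : ‖r - (c / n) • A r‖ ^ 2 = ‖r‖ ^ 2 - c ^ 2 / n := by
      rw [norm_sub_sq_real, h1, h2]
      field_simp
      ring
    rw [expand]
    have key : Sg ^ 2 / Up ^ 2 * ‖r‖ ^ 2 ≤ c ^ 2 / n := by
      rw [div_mul_eq_mul_div, div_le_div_iff₀ (by positivity) hn]
      have hc2 : Sg * ‖r‖ ^ 2 * (Sg * ‖r‖ ^ 2) ≤ c * c :=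
        mul_self_le_mul_self (by positivity) hc
      nlinarith [mul_le_mul_of_nonneg_left hnle
        (by positivity : (0:ℝ) ≤ Sg ^ 2 * ‖r‖ ^ 2),
        mul_le_mul_of_nonneg_right hc2 (by positivity : (0:ℝ) ≤ Up ^ 2)]
    nlinarith [key]

/-- Elman's GMRES convergence theorem: if Σ(x,x) ≤ (Ax,x) and ‖Ax‖ ≤ Υ‖x‖ for
all x, then the GMRES iterates (residual minimizers over the Krylov space)
satisfy ‖A(x − xᵐ)‖² ≤ (1 − Σ²/Υ²)ᵐ ‖A(x − x⁰)‖². -/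
theorem gmres_convergence
    {X : Type*} [NormedAddCommGroup X] [InnerProductSpace ℝ X]
    [FiniteDimensional ℝ X]
    (A : X →L[ℝ] X) (hbij : Function.Bijective A)
    (Sg Up : ℝ) (hSg : 0 < Sg) (hUp : 0 < Up)
    (hlow : ∀ v : X, Sg * ⟪v, v⟫ ≤ ⟪A v, v⟫)
    (hup : ∀ v : X, ‖A v‖ ≤ Up * ‖v‖)
    (x b : X) (hx : A x = b)
    (m : ℕ) (x0 xm : X)
    (hmem : xm - x0 ∈
      Submodule.span ℝ {v : X | ∃ k < m, v = (A ^ k) (A (x - x0))})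
    (hmin : ∀ y : X, y - x0 ∈
        Submodule.span ℝ {v : X | ∃ k < m, v = (A ^ k) (A (x - x0))} →
      ‖A (x - xm)‖ ≤ ‖A (x - y)‖) :
    ‖A (x - xm)‖ ^ 2 ≤ (1 - Sg ^ 2 / Up ^ 2) ^ m * ‖A (x - x0)‖ ^ 2 := by
  by_cases hr0 : A (x - x0) = 0
  · -- Then the minimizer has zero residual.
    have hle := hmin x0 (by simp)
    have h0 : ‖A (x - x0)‖ = 0 := by rw [hr0, norm_zero]
    have hAxm : ‖A (x - xm)‖ = 0 := le_antisymm (h0 ▸ hle) (norm_nonneg _)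
    rw [hAxm, h0]
    simp
  · -- Main case: the field-of-values bound forces Sg ≤ Up.
    have hq : 0 ≤ 1 - Sg ^ 2 / Up ^ 2 := by
      have hrpos : (0:ℝ) < ‖x - x0‖ := by
        have : x - x0 ≠ 0 := by
          intro h; apply hr0; rw [h]; exact map_zero A
        exact norm_pos_iff.mpr this
      have h1 : Sg * ‖x - x0‖ ^ 2 ≤ ⟪A (x - x0), x - x0⟫ := by
        have := hlow (x - x0)
        rwa [real_inner_self_eq_norm_sq] at this
      have h2 : ⟪A (x - x0), x - x0⟫ ≤ ‖A (x - x0)‖ * ‖x - x0‖ :=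
        real_inner_le_norm _ _
      have h3 : ‖A (x - x0)‖ ≤ Up * ‖x - x0‖ := hup _
      have hSU : Sg ≤ Up := by
        nlinarith [mul_le_mul_of_nonneg_right h3 (norm_nonneg (x - x0)),
          mul_pos hrpos hrpos]
      have hSU2 : Sg ^ 2 ≤ Up ^ 2 := pow_le_pow_left₀ hSg.le hSU 2
      have : Sg ^ 2 / Up ^ 2 ≤ 1 := by
        rw [div_le_one (by positivity)]; exact hSU2
      linarith
    -- Construct an explicit sequence of steepest-descent-type iterates.
    have key : ∀ n : ℕ, ∃ y : X,
        y - x0 ∈ Submodule.span ℝ {v : X | ∃ k < n, v = (A ^ k) (A (x - x0))} ∧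
        ‖A (x - y)‖ ^ 2 ≤ (1 - Sg ^ 2 / Up ^ 2) ^ n * ‖A (x - x0)‖ ^ 2 := by
      intro n
      induction n with
      | zero => exact ⟨x0, by simp, by simp⟩
      | succ n ih =>
        obtain ⟨y, hymem, hybd⟩ := ih
        obtain ⟨α, hα⟩ := gmres_one_step A Sg Up hSg hUp hlow hup hq (A (x - y))
        refine ⟨y + α • A (x - y), ?_, ?_⟩
        · -- membership in the larger Krylov space
          have hmono : Submodule.span ℝ {v : X | ∃ k < n, v = (A ^ k) (A (x - x0))} ≤
              Submodule.span ℝ {v : X | ∃ k < n + 1, v = (A ^ k) (A (x - x0))} := by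
            apply Submodule.span_mono
            rintro v ⟨k, hk, hv⟩
            exact ⟨k, Nat.lt_succ_of_lt hk, hv⟩
          have hy' : y - x0 ∈
              Submodule.span ℝ {v : X | ∃ k < n + 1, v = (A ^ k) (A (x - x0))} :=
            hmono hymem
          have hr0mem : A (x - x0) ∈
              Submodule.span ℝ {v : X | ∃ k < n + 1, v = (A ^ k) (A (x - x0))} := by
            apply Submodule.subset_span
            exact ⟨0, Nat.succ_pos n, by simp⟩
          have hAy : A (y - x0) ∈
              Submodule.span ℝ {v : X | ∃ k < n + 1, v = (A ^ k) (A (x - x0))} := by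
            have hmap : A (y - x0) ∈
                Submodule.map (A : X →ₗ[ℝ] X)
                  (Submodule.span ℝ {v : X | ∃ k < n, v = (A ^ k) (A (x - x0))}) :=
              Submodule.mem_map_of_mem hymem
            rw [Submodule.map_span] at hmap
            refine Submodule.span_mono ?_ hmap
            rintro w ⟨v, ⟨k, hk, hv⟩, rfl⟩
            refine ⟨k + 1, Nat.succ_lt_succ hk, ?_⟩
            rw [hv]
            show A ((A ^ k) (A (x - x0))) = (A ^ (k + 1)) (A (x - x0))
            rw [pow_succ']
            rfl
          have hsplit : A (x - y) = A (x - x0) - A (y - x0) := by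
            rw [← map_sub]
            congr 1
            abel
          have : y + α • A (x - y) - x0 =
              (y - x0) + α • (A (x - x0) - A (y - x0)) := by
            rw [← hsplit]; abel
          rw [this]
          exact Submodule.add_mem _ hy'
            (Submodule.smul_mem _ _ (Submodule.sub_mem _ hr0mem hAy))
        · -- residual bound
          have hres : x - (y + α • A (x - y)) = (x - y) - α • A (x - y) := by abel
          rw [hres, map_sub, map_smul]
          calc ‖A (x - y) - α • A (A (x - y))‖ ^ 2
              ≤ (1 - Sg ^ 2 / Up ^ 2) * ‖A (x - y)‖ ^ 2 := hα
            _ ≤ (1 - Sg ^ 2 / Up ^ 2) *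
                ((1 - Sg ^ 2 / Up ^ 2) ^ n * ‖A (x - x0)‖ ^ 2) :=
                mul_le_mul_of_nonneg_left hybd hq
            _ = (1 - Sg ^ 2 / Up ^ 2) ^ (n + 1) * ‖A (x - x0)‖ ^ 2 := by ring
    obtain ⟨y, hy, hb⟩ := key m
    have hle := hmin y hy
    have := pow_le_pow_left₀ (norm_nonneg _) hle 2
    linarith
end
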